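/- No unnecessary dups: In the abstract linear language λ̂_lin, let ae = infer(e). If ae contains a subterm dup Γ_d ae_s with x ∈ Γ_d, then every annotated term ae′ with erase(ae′) = e and Γ′ ⊩ ae′ for some multiset context Γ′ in which x occurs at most once also contains a subterm dup Γ_d′ ae_s′ with x ∈ Γ_d′. -/

import Mathlib

/-!
Formalization of the abstract linear language λ̂_lin from "Type Classes for
Lightweight Substructural Types" (Clamp), §4.1.
-/

namespace LamLin

/-- Unannotated terms: variables, abstractions, multiplicative pairs `⊗`, and
additive choices `&`. -/
inductive ETm : Type
| var : String → ETm
| lam : String → ETm → ETm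
| tens : ETm → ETm → ETm
| amp : ETm → ETm → ETm
deriving DecidableEq

/-- Annotated terms: additionally `dup Γ ae` and `drop Γ ae`, where `Γ` is a
multiset of variables. -/
inductive ATm : Type
| var : String → ATm
| lam : String → ATm → ATm
| tens : ATm → ATm → ATm
| amp : ATm → ATm → ATm
| dup : Multiset String → ATm → ATm
| drop : Multiset String → ATm → ATm

/-- Free variables of an unannotated term. -/
def ETm.fv : ETm → Finset String
| .var x => {x}
| .lam x e => e.fv \ {x}
| .tens a b => a.fv ∪ b.fv
| .amp a b => a.fv ∪ b.fv

/-- Free variables of an annotated term; for `dup Γ ae` and `drop Γ ae` this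
includes the variables of `Γ` together with the free variables of `ae`. -/
def ATm.fv : ATm → Finset String
| .var x => {x}
| .lam x a => a.fv \ {x}
| .tens a b => a.fv ∪ b.fv
| .amp a b => a.fv ∪ b.fv
| .dup Γ a => Γ.toFinset ∪ a.fv
| .drop Γ a => Γ.toFinset ∪ a.fv

/-- Well-formedness `Γ ⊩ ae` of an annotated term in a multiset context. -/
inductive WF : Multiset String → ATm → Prop
| var : WF {x} (.var x)
| lam : x ∉ Γ → WF (Γ + {x}) a → WF Γ (.lam x a)
| tens : WF Γ₁ a → WF Γ₂ b → WF (Γ₁ + Γ₂) (.tens a b)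
| amp : WF Γ a → WF Γ b → WF Γ (.amp a b)
| dup : WF (Γ₁ + Γ₂ + Γ₂) a → WF (Γ₁ + Γ₂) (.dup Γ₂ a)
| drop : WF Γ₁ a → WF (Γ₁ + Γ₂) (.drop Γ₂ a)

/-- The dup/drop inference (elaboration) algorithm. -/
def infer : ETm → ATm
| .var x => .var x
| .lam x e =>
    if x ∈ e.fv then .lam x (infer e) else .lam x (.drop {x} (infer e))
| .tens a b => .dup (a.fv ∩ b.fv).val (.tens (infer a) (infer b))
| .amp a b =>
    .amp (.drop (b.fv \ a.fv).val (infer a)) (.drop (a.fv \ b.fv).val (infer b))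

/-- Erasure of dup/drop annotations. -/
def erase : ATm → ETm
| .var x => .var x
| .lam x a => .lam x (erase a)
| .tens a b => .tens (erase a) (erase b)
| .amp a b => .amp (erase a) (erase b)
| .dup _ a => erase a
| .drop _ a => erase a

/-- `Subterm s t`: `s` occurs as a subterm of the annotated term `t`. -/
inductive Subterm : ATm → ATm → Prop
| refl : Subterm a a
| lam : Subterm s a → Subterm s (.lam x a)
| tensL : Subterm s a → Subterm s (.tens a b)
| tensR : Subterm s b → Subterm s (.tens a b)
| ampL : Subterm s a → Subterm s (.amp a b)
| ampR : Subterm s b → Subterm s (.amp a b)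
| dup : Subterm s a → Subterm s (.dup Γ a)
| drop : Subterm s a → Subterm s (.drop Γ a)

/-- `WFSub Γ ae Γₛ aeₛ`: there is a derivation of `Γ ⊩ ae` containing the
judgment `Γₛ ⊩ aeₛ` as a subderivation. -/
inductive WFSub : Multiset String → ATm → Multiset String → ATm → Prop
| refl : WF Γ a → WFSub Γ a Γ a
| lam : x ∉ Γ → WFSub (Γ + {x}) a Γs as → WFSub Γ (.lam x a) Γs as
| tensL : WFSub Γ₁ a Γs as → WF Γ₂ b → WFSub (Γ₁ + Γ₂) (.tens a b) Γs as
| tensR : WF Γ₁ a → WFSub Γ₂ b Γs as → WFSub (Γ₁ + Γ₂) (.tens a b) Γs as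
| ampL : WFSub Γ a Γs as → WF Γ b → WFSub Γ (.amp a b) Γs as
| ampR : WF Γ a → WFSub Γ b Γs as → WFSub Γ (.amp a b) Γs as
| dup : WFSub (Γ₁ + Γ₂ + Γ₂) a Γs as → WFSub (Γ₁ + Γ₂) (.dup Γ₂ a) Γs as
| drop : WFSub Γ₁ a Γs as → WFSub (Γ₁ + Γ₂) (.drop Γ₂ a) Γs as

end LamLin

/-
`infer` puts `x` into a `dup` only at a pair `e₁ ⊗ e₂` with `x` free in both components.
Count the free occurrences of `x` in a term, taking the maximum over the two branches of
each `&` (which share their context): a term well formed in `Γ` without any `dup` of `x`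
uses `x` at most `Γ.count x` times. Following a derivation of `Γ′ ⊩ ae′` down to that pair
keeps at most one copy of `x` in the context (a binder of `x` adds a copy only to a context
without one), so one component of the pair is well formed with no copy of `x` although `x`
is free in it; that component must contain a `dup` of `x`.
-/

namespace LamLin

def HasDupOf (x : String) (a : ATm) : Prop :=
  ∃ Γ s, Subterm (.dup Γ s) a ∧ x ∈ Γ

section HasDupOf

variable {x : String}

@[simp]
theorem not_hasDupOf_var (y : String) : ¬HasDupOf x (.var y) := by
  rintro ⟨Γ, s, h, -⟩
  cases h

@[simp]
theorem hasDupOf_lam {y : String} {a : ATm} : HasDupOf x (.lam y a) ↔ HasDupOf x a := by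
  constructor
  · rintro ⟨Γ, s, h, hx⟩
    cases h with
    | lam h => exact ⟨Γ, s, h, hx⟩
  · rintro ⟨Γ, s, h, hx⟩
    exact ⟨Γ, s, .lam h, hx⟩

@[simp]
theorem hasDupOf_tens {a b : ATm} :
    HasDupOf x (.tens a b) ↔ HasDupOf x a ∨ HasDupOf x b := by
  constructor
  · rintro ⟨Γ, s, h, hx⟩
    cases h with
    | tensL h => exact .inl ⟨Γ, s, h, hx⟩
    | tensR h => exact .inr ⟨Γ, s, h, hx⟩
  · rintro (⟨Γ, s, h, hx⟩ | ⟨Γ, s, h, hx⟩)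
    exacts [⟨Γ, s, .tensL h, hx⟩, ⟨Γ, s, .tensR h, hx⟩]

@[simp]
theorem hasDupOf_amp {a b : ATm} :
    HasDupOf x (.amp a b) ↔ HasDupOf x a ∨ HasDupOf x b := by
  constructor
  · rintro ⟨Γ, s, h, hx⟩
    cases h with
    | ampL h => exact .inl ⟨Γ, s, h, hx⟩
    | ampR h => exact .inr ⟨Γ, s, h, hx⟩
  · rintro (⟨Γ, s, h, hx⟩ | ⟨Γ, s, h, hx⟩)
    exacts [⟨Γ, s, .ampL h, hx⟩, ⟨Γ, s, .ampR h, hx⟩]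

@[simp]
theorem hasDupOf_dup {Γ : Multiset String} {a : ATm} :
    HasDupOf x (.dup Γ a) ↔ x ∈ Γ ∨ HasDupOf x a := by
  constructor
  · rintro ⟨Γ', s, h, hx⟩
    cases h with
    | refl => exact .inl hx
    | dup h => exact .inr ⟨Γ', s, h, hx⟩
  · rintro (hx | ⟨Γ', s, h, hx⟩)
    exacts [⟨Γ, a, .refl, hx⟩, ⟨Γ', s, .dup h, hx⟩]

@[simp]
theorem hasDupOf_drop {Γ : Multiset String} {a : ATm} :
    HasDupOf x (.drop Γ a) ↔ HasDupOf x a := by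
  constructor
  · rintro ⟨Γ', s, h, hx⟩
    cases h with
    | drop h => exact ⟨Γ', s, h, hx⟩
  · rintro ⟨Γ', s, h, hx⟩
    exact ⟨Γ', s, .drop h, hx⟩

theorem hasDupOf_infer_tens {e₁ e₂ : ETm} (h : HasDupOf x (infer (.tens e₁ e₂))) :
    (x ∈ e₁.fv ∧ x ∈ e₂.fv) ∨ HasDupOf x (infer e₁) ∨ HasDupOf x (infer e₂) := by
  simpa [infer] using h

end HasDupOf

def ETm.occ (x : String) : ETm → ℕ
  | .var y => if y = x then 1 else 0
  | .lam y e => if y = x then 0 else e.occ x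
  | .tens a b => a.occ x + b.occ x
  | .amp a b => max (a.occ x) (b.occ x)

theorem ETm.one_le_occ_of_mem_fv {x : String} {e : ETm} (h : x ∈ e.fv) : 1 ≤ e.occ x := by
  induction e with
  | var y => simp_all [fv, occ]
  | lam y e ih =>
    simp only [fv, Finset.mem_sdiff, Finset.mem_singleton] at h
    simpa [occ, Ne.symm h.2] using ih h.1
  | tens a b iha ihb =>
    simp only [fv, Finset.mem_union] at h
    rcases h with h | h
    · exact (iha h).trans (Nat.le_add_right _ _)
    · exact (ihb h).trans (Nat.le_add_left _ _)
  | amp a b iha ihb =>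
    simp only [fv, Finset.mem_union] at h
    rcases h with h | h
    · exact le_max_of_le_left (iha h)
    · exact le_max_of_le_right (ihb h)

theorem occ_erase_le_count_of_not_hasDupOf {x : String} {Γ : Multiset String} {a : ATm}
    (hwf : WF Γ a) (hnd : ¬HasDupOf x a) : (erase a).occ x ≤ Γ.count x := by
  induction hwf with
  | @var y => by_cases hy : y = x <;> simp [erase, ETm.occ, hy]
  | @lam Γ y a _ _ ih =>
    by_cases hy : y = x
    · simp [erase, ETm.occ, hy]
    · simpa [erase, ETm.occ, hy, Multiset.count_singleton, Ne.symm hy] using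
        ih (by simpa using hnd)
  | tens _ _ iha ihb =>
    simp only [hasDupOf_tens, not_or] at hnd
    simpa [erase, ETm.occ] using Nat.add_le_add (iha hnd.1) (ihb hnd.2)
  | amp _ _ iha ihb =>
    simp only [hasDupOf_amp, not_or] at hnd
    simpa [erase, ETm.occ] using ⟨iha hnd.1, ihb hnd.2⟩
  | dup _ ih =>
    simp only [hasDupOf_dup, not_or] at hnd
    have := ih hnd.2
    simp_all [erase]
  | drop _ ih =>
    have := ih (by simpa using hnd)
    simp only [erase, Multiset.count_add]
    omega

theorem hasDupOf_of_mem_fv_erase {x : String} {Γ : Multiset String} {a : ATm}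
    (hwf : WF Γ a) (hfv : x ∈ (erase a).fv) (hc : Γ.count x = 0) : HasDupOf x a := by
  by_contra hnd
  have := occ_erase_le_count_of_not_hasDupOf hwf hnd
  have := ETm.one_le_occ_of_mem_fv hfv
  omega

theorem hasDupOf_of_hasDupOf_infer_erase {x : String} {Γ : Multiset String} {a : ATm}
    (hwf : WF Γ a) (hc : Γ.count x ≤ 1) (h : HasDupOf x (infer (erase a))) : HasDupOf x a := by
  induction hwf with
  | var => simp [erase, infer] at h
  | @lam Γ y a hy _ ih =>
    have hc' : (Γ + {y}).count x ≤ 1 := by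
      by_cases hxy : x = y
      · simp [hxy, Multiset.count_eq_zero_of_notMem hy]
      · simpa [Multiset.count_singleton, hxy] using hc
    have h' : HasDupOf x (infer (erase a)) := by
      simp only [erase, infer] at h
      split_ifs at h <;> simpa using h
    exact hasDupOf_lam.2 (ih hc' h')
  | @tens Γ₁ a Γ₂ b hwfa hwfb iha ihb =>
    rw [Multiset.count_add] at hc
    rcases hasDupOf_infer_tens h with ⟨hxa, hxb⟩ | h | h
    · obtain h0 | h0 : Γ₁.count x = 0 ∨ Γ₂.count x = 0 := by omega
      exacts [hasDupOf_tens.2 (.inl (hasDupOf_of_mem_fv_erase hwfa hxa h0)),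
        hasDupOf_tens.2 (.inr (hasDupOf_of_mem_fv_erase hwfb hxb h0))]
    · exact hasDupOf_tens.2 (.inl (iha (by omega) h))
    · exact hasDupOf_tens.2 (.inr (ihb (by omega) h))
  | amp _ _ iha ihb =>
    simp only [erase, infer, hasDupOf_amp, hasDupOf_drop] at h
    exact hasDupOf_amp.2 (h.imp (iha hc) (ihb hc))
  | @dup Γ₁ Γ₂ a _ ih =>
    by_cases hx : x ∈ Γ₂
    · exact hasDupOf_dup.2 (.inl hx)
    · simp only [Multiset.count_add, Multiset.count_eq_zero_of_notMem hx] at hc ih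
      exact hasDupOf_dup.2 (.inr (ih hc h))
  | drop _ ih =>
    rw [Multiset.count_add] at hc
    exact hasDupOf_drop.2 (ih (by omega) h)

/-- **No unnecessary dups** (Lemma 12 of the Clamp paper).
Let `ae = infer(e)`. If `ae` contains a subterm `dup Γ_d ae_s` with
`x ∈ Γ_d`, then every annotated term `ae′` with `erase(ae′) = e` that is
well formed in some context `Γ′` in which `x` occurs at most once also
contains a subterm `dup Γ_d′ ae_s′` with `x ∈ Γ_d′`. -/
theorem no_unnecessary_dups
    {e : ETm} {x : String} {Γd : Multiset String} {aes : ATm}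
    (h : Subterm (.dup Γd aes) (infer e)) (hx : x ∈ Γd)
    {ae' : ATm} {Γ' : Multiset String}
    (hwf : WF Γ' ae') (herase : erase ae' = e) (hcount : Γ'.count x ≤ 1) :
    ∃ (Γd' : Multiset String) (aes' : ATm),
      Subterm (.dup Γd' aes') ae' ∧ x ∈ Γd' := by
  subst herase
  exact hasDupOf_of_hasDupOf_infer_erase hwf hcount ⟨Γd, aes, h, hx⟩

end LamLin
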